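/- For all nonnegative integers n, q, r with r ≥ 1, the identity Σ_p C(p, q) · C(r-1, n-p-r) · C(n+1-r, p) = C(n+1-r, q) · C(n-q, r) holds, where the sum is over all nonnegative integers p. -/

import Mathlib

/-- For nonnegative integers `n, q, r` with `r ≥ 1`,
`∑_p C(p,q) C(r-1, n-p-r) C(n+1-r, p) = C(n+1-r, q) · C(n-q, r)`, the sum being over all
nonnegative integers `p` (the convention `C(a,b) = 0` for `b < 0` is encoded by the
condition `p + r ≤ n`; terms with `p > n` vanish since then `C(n+1-r,p) = 0`). -/
theorem stmt6 (n q r : ℕ) (hr : 1 ≤ r) :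
    ∑ p ∈ Finset.range (n + 1),
        (if p + r ≤ n then p.choose q * (r - 1).choose (n - p - r) * (n + 1 - r).choose p
          else 0) =
      (n + 1 - r).choose q * (n - q).choose r := by
  rcases le_or_gt r n with h | h
  · set m := n + 1 - r with hm
    have hmr : m + r = n + 1 := by omega
    -- Step 1: reduce the sum to `range m`
    have h1 : ∑ p ∈ Finset.range (n + 1),
        (if p + r ≤ n then p.choose q * (r - 1).choose (n - p - r) * m.choose p else 0) =
        ∑ p ∈ Finset.range m, p.choose q * (r - 1).choose (m - 1 - p) * m.choose p := by
      rw [← Finset.sum_subset (Finset.range_subset_range.2 (show m ≤ n + 1 by omega))]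
      · apply Finset.sum_congr rfl
        intro p hp
        rw [Finset.mem_range] at hp
        rw [if_pos (by omega), show n - p - r = m - 1 - p by omega]
      · intro p hp hnp
        rw [Finset.mem_range] at hp
        rw [Finset.mem_range, not_lt] at hnp
        rw [if_neg (by omega)]
    rw [h1]
    rcases lt_or_ge q m with hq | hq
    · -- main case: q < m
      have h2 : ∑ p ∈ Finset.range m, p.choose q * (r - 1).choose (m - 1 - p) * m.choose p =
          ∑ j ∈ Finset.range (m - q),
            (q + j).choose q * (r - 1).choose (m - 1 - (q + j)) * m.choose (q + j) := by
        have hz : ∑ p ∈ Finset.Ico 0 q, p.choose q * (r - 1).choose (m - 1 - p) * m.choose p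
            = 0 := by
          apply Finset.sum_eq_zero
          intro p hp
          rw [Finset.mem_Ico] at hp
          rw [Nat.choose_eq_zero_of_lt hp.2, Nat.zero_mul, Nat.zero_mul]
        rw [Finset.range_eq_Ico, ← Finset.sum_Ico_consecutive _ (Nat.zero_le q) hq.le, hz,
          Nat.zero_add, Finset.sum_Ico_eq_sum_range, Finset.range_eq_Ico]
      rw [h2]
      have h3 : ∀ j ∈ Finset.range (m - q),
          (q + j).choose q * (r - 1).choose (m - 1 - (q + j)) * m.choose (q + j) =
          m.choose q * ((m - q).choose j * (r - 1).choose (m - 1 - q - j)) := by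
        intro j hj
        rw [Finset.mem_range] at hj
        have hkm : q + j ≤ m := by omega
        have := Nat.choose_mul (n := m) (k := q + j) (s := q) (Nat.le_add_right q j)
        rw [Nat.add_sub_cancel_left] at this
        have hsub : m - 1 - (q + j) = m - 1 - q - j := by omega
        rw [hsub]
        calc (q + j).choose q * (r - 1).choose (m - 1 - q - j) * m.choose (q + j)
            = m.choose (q + j) * (q + j).choose q * (r - 1).choose (m - 1 - q - j) := by ring
          _ = m.choose q * (m - q).choose j * (r - 1).choose (m - 1 - q - j) := by rw [this]
          _ = m.choose q * ((m - q).choose j * (r - 1).choose (m - 1 - q - j)) := by ring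
      rw [Finset.sum_congr rfl h3, ← Finset.mul_sum]
      congr 1
      -- Vandermonde
      have hv := Nat.add_choose_eq (m - q) (r - 1) (m - 1 - q)
      rw [Finset.Nat.sum_antidiagonal_eq_sum_range_succ_mk] at hv
      have hrange : m - 1 - q + 1 = m - q := by omega
      have hv' : ∑ i ∈ Finset.range (m - q),
          (m - q).choose i * (r - 1).choose (m - 1 - q - i)
          = (m - q + (r - 1)).choose (m - 1 - q) := by
        rw [hv]
        exact Finset.sum_congr (by rw [Nat.succ_eq_add_one, hrange]) (fun i _ => rfl)
      rw [hv', show m - q + (r - 1) = n - q by omega,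
        ← Nat.choose_symm (show m - 1 - q ≤ n - q by omega),
        show n - q - (m - 1 - q) = r by omega]
    · -- degenerate case q ≥ m : both sides vanish
      have hL : ∑ p ∈ Finset.range m, p.choose q * (r - 1).choose (m - 1 - p) * m.choose p
          = 0 := by
        apply Finset.sum_eq_zero
        intro p hp
        rw [Finset.mem_range] at hp
        rw [Nat.choose_eq_zero_of_lt (by omega), Nat.zero_mul, Nat.zero_mul]
      rw [hL]
      rcases eq_or_lt_of_le hq with hq' | hq'
      · rw [← hq', Nat.choose_eq_zero_of_lt (show n - m < r by omega), Nat.mul_zero]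
      · rw [Nat.choose_eq_zero_of_lt hq', Nat.zero_mul]
  · -- r > n : both sides vanish
    have hL : ∀ p ∈ Finset.range (n + 1),
        (if p + r ≤ n then p.choose q * (r - 1).choose (n - p - r) * (n + 1 - r).choose p
          else 0) = 0 := by
      intro p hp
      rw [if_neg (by omega)]
    rw [Finset.sum_eq_zero hL,
      Nat.choose_eq_zero_of_lt (show n - q < r by omega), Nat.mul_zero]
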